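/- Soundness of unrestricted domain blocking: for every clause set M, if M is E-satisfiable then blud(M) is E-satisfiable. -/

import Mathlib

namespace BUMG

/-- First-order terms over function symbols `F`, with variables indexed by `ℕ`. -/
inductive Term (F : Type) : Type where
  | var : ℕ → Term F
  | app : F → List (Term F) → Term F

namespace Term
variable {F : Type}

/-- The list of variables occurring in a term. -/
def vars : Term F → List ℕ
  | var n => [n]
  | app _ ts => ts.attach.flatMap (fun t => vars t.1)
decreasing_by simp_wf; have := List.sizeOf_lt_of_mem t.2; omega

/-- The function symbols (with the arity of the occurrence) occurring in a term. -/
def funcs : Term F → List (F × ℕ)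
  | var _ => []
  | app f ts => (f, ts.length) :: ts.attach.flatMap (fun t => funcs t.1)
decreasing_by simp_wf; have := List.sizeOf_lt_of_mem t.2; omega

/-- Applying a substitution to a term. -/
def subst (g : ℕ → Term F) : Term F → Term F
  | var n => g n
  | app f ts => app f (ts.attach.map (fun t => subst g t.1))
decreasing_by simp_wf; have := List.sizeOf_lt_of_mem t.2; omega

/-- The number of occurrences of symbols (variables and function symbols) in a term. -/
def size : Term F → ℕ
  | var _ => 1
  | app _ ts => 1 + (ts.attach.map (fun t => size t.1)).sum
decreasing_by simp_wf; have := List.sizeOf_lt_of_mem t.2; omega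

/-- A term is ground iff it contains no variables. -/
def IsGround (t : Term F) : Prop := t.vars = []

def isVar : Term F → Bool
  | var _ => true
  | app _ _ => false

/-- A proper functional term is a term that is neither a variable nor a constant. -/
def isPF : Term F → Bool
  | app _ (_ :: _) => true
  | _ => false

/-- The subterm relation. -/
inductive Subterm : Term F → Term F → Prop
  | refl (t : Term F) : Subterm t t
  | app {s t : Term F} {f : F} {ts : List (Term F)} :
      t ∈ ts → Subterm s t → Subterm s (app f ts)

end Term

/-- Atoms over predicate symbols `P` and function symbols `F`. -/
structure Atom (P F : Type) where
  pred : P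
  args : List (Term F)

namespace Atom
variable {P F : Type}

def subst (g : ℕ → Term F) (a : Atom P F) : Atom P F := ⟨a.pred, a.args.map (Term.subst g)⟩
def vars (a : Atom P F) : List ℕ := a.args.flatMap Term.vars
def IsGround (a : Atom P F) : Prop := a.vars = []
def funcs (a : Atom P F) : List (F × ℕ) := a.args.flatMap Term.funcs
/-- Whether the atom contains a proper functional term. -/
def hasPF (a : Atom P F) : Bool := a.args.any Term.isPF
def size (a : Atom P F) : ℕ := 1 + (a.args.map Term.size).sum

end Atom

/-- A clause `H₁ ∨ ... ∨ Hₘ ← B₁ ∧ ... ∧ Bₖ` with head atoms `heads`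
and body atoms `body`. -/
structure Clause (P F : Type) where
  heads : List (Atom P F)
  body : List (Atom P F)

namespace Clause
variable {P F : Type}

def atoms (C : Clause P F) : List (Atom P F) := C.heads ++ C.body
def vars (C : Clause P F) : List ℕ := C.atoms.flatMap Atom.vars
def bodyVars (C : Clause P F) : List ℕ := C.body.flatMap Atom.vars
def headVars (C : Clause P F) : List ℕ := C.heads.flatMap Atom.vars
def maxVar (C : Clause P F) : ℕ := C.vars.foldr max 0
def subst (g : ℕ → Term F) (C : Clause P F) : Clause P F :=
  ⟨C.heads.map (Atom.subst g), C.body.map (Atom.subst g)⟩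
/-- The predicate symbols (with the arity of the occurrence) occurring in a clause. -/
def preds (C : Clause P F) : List (P × ℕ) := C.atoms.map (fun a => (a.pred, a.args.length))
/-- The function symbols (with the arity of the occurrence) occurring in a clause. -/
def funcs (C : Clause P F) : List (F × ℕ) := C.atoms.flatMap Atom.funcs
/-- The number of occurrences of symbols in a clause. -/
def size (C : Clause P F) : ℕ := (C.atoms.map Atom.size).sum

/-- A clause is range-restricted iff every variable occurring in it occurs in its body. -/
def RangeRestricted (C : Clause P F) : Prop := ∀ v ∈ C.vars, v ∈ C.bodyVars

/-- A Bernays–Schönfinkel clause: every functional term occurring in it is a constant. -/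
def BS (C : Clause P F) : Prop := ∀ fn ∈ C.funcs, fn.2 = 0

end Clause

/-- A clause set is range-restricted iff all its clauses are. -/
def RangeRestrictedSet {P F : Type} (M : Set (Clause P F)) : Prop :=
  ∀ C ∈ M, C.RangeRestricted

/-- The predicate symbols (with arities) occurring in a clause set. -/
def predsOf {P F : Type} (M : Set (Clause P F)) : Set (P × ℕ) :=
  { pn | ∃ C ∈ M, pn ∈ C.preds }

/-- The function symbols (with arities) occurring in a clause set. -/
def funcsOf {P F : Type} (M : Set (Clause P F)) : Set (F × ℕ) :=
  { fn | ∃ C ∈ M, fn ∈ C.funcs }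

/-- A signature: a set of predicate symbols with arities and
a set of function symbols with arities. -/
structure Sig (P F : Type) where
  preds : Set (P × ℕ)
  funcs : Set (F × ℕ)

/-- The clause set `M` is well-formed over the signature `σ`: all symbols occurring in `M`
belong to `σ` (with matching arities). -/
def WFSet {P F : Type} (σ : Sig P F) (M : Set (Clause P F)) : Prop :=
  ∀ C ∈ M, (∀ pn ∈ C.preds, pn ∈ σ.preds) ∧ (∀ fn ∈ C.funcs, fn ∈ σ.funcs)

/-- The total number of occurrences of symbols in a clause set. -/
noncomputable def setSize {P F : Type} (M : Set (Clause P F)) : ℕ :=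
  ∑ᶠ C ∈ M, C.size

/-! ### Herbrand semantics -/

/-- A substitution is ground iff it maps every variable to a ground term. -/
def GroundSubst {F : Type} (g : ℕ → Term F) : Prop := ∀ n, (g n).IsGround

/-- A (Herbrand) interpretation `I` (a set of ground atoms) satisfies a clause iff
it satisfies every ground instance of it. -/
def satClause {P F : Type} (I : Set (Atom P F)) (C : Clause P F) : Prop :=
  ∀ g : ℕ → Term F, GroundSubst g →
    (∀ a ∈ C.body, a.subst g ∈ I) → ∃ a ∈ C.heads, a.subst g ∈ I

/-- A clause set is satisfiable iff some Herbrand interpretation (a set of ground atoms)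
satisfies every ground instance of every clause of it. -/
def Satisfiable {P F : Type} (M : Set (Clause P F)) : Prop :=
  ∃ I : Set (Atom P F), (∀ a ∈ I, a.IsGround) ∧ ∀ C ∈ M, satClause I C

/-! ### Equality axioms and E-satisfiability -/

/-- The equality atom `s ≈ t` (`eqP` being the distinguished equality predicate `≈`). -/
def eqAtom {P F : Type} (eqP : P) (s t : Term F) : Atom P F := ⟨eqP, [s, t]⟩

def rangeVars {F : Type} (n : ℕ) : List (Term F) := (List.range n).map Term.var

def xsList {F : Type} (n : ℕ) : List (Term F) := (List.range n).map (fun i => Term.var (2*i))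
def ysList {F : Type} (n : ℕ) : List (Term F) := (List.range n).map (fun i => Term.var (2*i+1))
def eqConjList {P F : Type} (eqP : P) (n : ℕ) : List (Atom P F) :=
  (List.range n).map (fun i => eqAtom eqP (Term.var (2*i)) (Term.var (2*i+1)))

/-- The equality axioms `EAX`: `≈` is reflexive, symmetric, transitive and compatible with
the given function and predicate symbols. -/
def EAX {P F : Type} (eqP : P) (Ps : Set (P × ℕ)) (Fs : Set (F × ℕ)) : Set (Clause P F) :=
  { ⟨[eqAtom eqP (Term.var 0) (Term.var 0)], []⟩,
    ⟨[eqAtom eqP (Term.var 1) (Term.var 0)], [eqAtom eqP (Term.var 0) (Term.var 1)]⟩,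
    ⟨[eqAtom eqP (Term.var 0) (Term.var 2)],
      [eqAtom eqP (Term.var 0) (Term.var 1), eqAtom eqP (Term.var 1) (Term.var 2)]⟩ } ∪
  { D | ∃ fn ∈ Fs,
      D = ⟨[eqAtom eqP (Term.app fn.1 (xsList fn.2)) (Term.app fn.1 (ysList fn.2))],
           eqConjList eqP fn.2⟩ } ∪
  { D | ∃ pn ∈ Ps,
      D = ⟨[⟨pn.1, ysList pn.2⟩], ⟨pn.1, xsList pn.2⟩ :: eqConjList eqP pn.2⟩ }

/-- A clause set `M` is E-satisfiable iff `M` together with the equality axioms for the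
symbols occurring in `M` is satisfiable. -/
def ESatisfiable {P F : Type} (eqP : P) (M : Set (Clause P F)) : Prop :=
  Satisfiable (M ∪ EAX eqP (predsOf M) (funcsOf M))

/-! ### Range-restricting transformations -/

/-- The atom `dom(t)`. -/
def domAtom {P F : Type} (domP : P) (t : Term F) : Atom P F := ⟨domP, [t]⟩

/-- The term `c` for a constant `c`. -/
def cTerm {F : Type} (c : F) : Term F := Term.app c []

/-- The clause `dom(c) ← ⊤`. -/
def domcClause {P F : Type} (domP : P) (c : F) : Clause P F :=
  ⟨[domAtom domP (cTerm c)], []⟩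

/-- Range-restricting a clause (Step (2) of `crr`, Step (3) of `rr`):
`H ← B` becomes `H ← B ∧ dom(x₁) ∧ ... ∧ dom(xₖ)` where `x₁,...,xₖ` are the variables
occurring in the head but not in the body. -/
def rangeRestrictClause {P F : Type} (domP : P) (C : Clause P F) : Clause P F :=
  ⟨C.heads, C.body ++
    ((C.headVars.filter (fun v => v ∉ C.bodyVars)).dedup).map
      (fun v => domAtom domP (Term.var v))⟩

/-- The argument list of the term abstraction of an atom: argument positions holding
non-variable terms are replaced by fresh variables. -/
def abstrArgs {F : Type} (base : ℕ) (ts : List (Term F)) : List (Term F) :=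
  ts.mapIdx (fun i t => if t.isVar then t else Term.var (base + i))

/-- Step (2) of the `rr` transformation: for each clause `H ← B` of `M`, each body atom
`P(t₁,...,tₙ)` of `B` with term abstraction `P(s₁,...,sₙ)` and abstraction substitution `α`,
the clauses `dom(xᵢ)α ← P(s₁,...,sₙ)` for every `xᵢ` in the domain of `α`. -/
def step2Set {P F : Type} (domP : P) (M : Set (Clause P F)) : Set (Clause P F) :=
  { D | ∃ C ∈ M, ∃ a ∈ C.body, ∃ i : Fin a.args.length,
        (a.args.get i).isVar = false ∧
        D = ⟨[domAtom domP (a.args.get i)],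
             [⟨a.pred, abstrArgs (C.maxVar + 1) a.args⟩]⟩ }

/-- Step (4) of the `rr` transformation: the clauses `dom(xᵢ) ← P(x₁,...,xₙ)` for every
`n`-ary predicate symbol `P` of the signature and every `1 ≤ i ≤ n`. -/
def step4Set {P F : Type} (domP : P) (Ps : Set (P × ℕ)) : Set (Clause P F) :=
  { D | ∃ pn ∈ Ps, ∃ i, i < pn.2 ∧
        D = ⟨[domAtom domP (Term.var i)], [⟨pn.1, rangeVars pn.2⟩]⟩ }

/-- Step (5) of the `rr` transformation: the clauses `dom(xᵢ) ← dom(f(x₁,...,xₙ))` for every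
`n`-ary function symbol `f` of the signature and every `1 ≤ i ≤ n`. -/
def step5Set {P F : Type} (domP : P) (Fs : Set (F × ℕ)) : Set (Clause P F) :=
  { D | ∃ fn ∈ Fs, ∃ i, i < fn.2 ∧
        D = ⟨[domAtom domP (Term.var i)],
             [domAtom domP (Term.app fn.1 (rangeVars fn.2))]⟩ }

/-- The new range-restricting transformation `rr` (over the signature `σ`, with fresh unary
predicate symbol `dom` and constant `c`): the clauses of `M`, the clause `dom(c) ← ⊤` and
the Step-(2) clauses, all range-restricted by Step (3), together with the Step-(4) and
Step-(5) clauses. -/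
def rr {P F : Type} [DecidableEq P] [DecidableEq F] (σ : Sig P F) (domP : P) (c : F)
    (M : Set (Clause P F)) : Set (Clause P F) :=
  (rangeRestrictClause domP '' (M ∪ {domcClause domP c} ∪ step2Set domP M))
  ∪ step4Set domP σ.preds ∪ step5Set domP σ.funcs

/-- Step (3) of the classical transformation `crr`: the clauses
`dom(f(x₁,...,xₙ)) ← dom(x₁) ∧ ... ∧ dom(xₙ)` enumerating the Herbrand universe. -/
def crrStep3 {P F : Type} (domP : P) (Fs : Set (F × ℕ)) : Set (Clause P F) :=
  { D | ∃ fn ∈ Fs,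
        D = ⟨[domAtom domP (Term.app fn.1 (rangeVars fn.2))],
             (List.range fn.2).map (fun i => domAtom domP (Term.var i))⟩ }

/-- The classical range-restricting transformation `crr`. -/
def crr {P F : Type} [DecidableEq P] [DecidableEq F] (σ : Sig P F) (domP : P) (c : F)
    (M : Set (Clause P F)) : Set (Clause P F) :=
  (rangeRestrictClause domP '' (M ∪ {domcClause domP c})) ∪ crrStep3 domP σ.funcs

/-! ### Shifting -/

/-- Partial flattening of the arguments of a non-equational body atom: top-level proper
functional terms are replaced by fresh variables. The `j`-th body atom uses the fresh
variables `base + Nat.pair j i`. -/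
def pfArgs {P F : Type} [DecidableEq P] (eqP : P) (base j : ℕ) (a : Atom P F) : Atom P F :=
  if a.pred = eqP then a
  else ⟨a.pred, a.args.mapIdx (fun i t => if t.isPF then Term.var (base + Nat.pair j i) else t)⟩

/-- The equations `tᵢ ≈ xᵢ` introduced by partially flattening a body atom. -/
def pfEqs {P F : Type} [DecidableEq P] (eqP : P) (base j : ℕ) (a : Atom P F) :
    List (Atom P F) :=
  if a.pred = eqP then []
  else (a.args.mapIdx (fun i t => (i, t))).filterMap
        (fun p => if p.2.isPF then
            some (eqAtom eqP p.2 (Term.var (base + Nat.pair j p.1))) else none)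

/-- Partial flattening of a clause. -/
def pfClause {P F : Type} [DecidableEq P] (eqP : P) (C : Clause P F) : Clause P F :=
  ⟨C.heads,
   C.body.mapIdx (fun j a => pfArgs eqP (C.maxVar + 1) j a) ++
   (C.body.mapIdx (fun j a => pfEqs eqP (C.maxVar + 1) j a)).flatten⟩

/-- The reflexivity unit clause `x ≈ x ← ⊤`. -/
def reflClause {P F : Type} (eqP : P) : Clause P F :=
  ⟨[eqAtom eqP (Term.var 0) (Term.var 0)], []⟩

/-- The partial flattening transformation `pf`. -/
def pf {P F : Type} [DecidableEq P] (eqP : P) (M : Set (Clause P F)) : Set (Clause P F) :=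
  pfClause eqP '' M ∪ {reflClause eqP}

/-- The atom `P̄(t₁,...,tₙ)` for the atom `P(t₁,...,tₙ)`, where `bar` maps each predicate
symbol `P` to the fresh predicate symbol `P̄` uniquely associated with it. -/
def barAtom {P F : Type} (bar : P → P) (a : Atom P F) : Atom P F := ⟨bar a.pred, a.args⟩

/-- Basic shifting of a clause: the body atoms containing a proper functional term are
moved, negated (via `bar`), into the head. -/
def bsClause {P F : Type} (bar : P → P) (C : Clause P F) : Clause P F :=
  ⟨C.heads ++ (C.body.filter (fun a => a.hasPF)).map (barAtom bar),
   C.body.filter (fun a => !a.hasPF)⟩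

/-- The predicate symbols (with arities) of shifted atoms of `M`. -/
def shiftedPreds {P F : Type} (M : Set (Clause P F)) : Set (P × ℕ) :=
  { pn | ∃ C ∈ M, ∃ a ∈ C.body, a.hasPF = true ∧ pn = (a.pred, a.args.length) }

/-- The basic shifting transformation `bs`: shift deep body atoms and add the shifted atom
consistency clauses `⊥ ← P(x₁,...,xₙ) ∧ P̄(x₁,...,xₙ)`. -/
def bs {P F : Type} (bar : P → P) (M : Set (Clause P F)) : Set (Clause P F) :=
  bsClause bar '' M ∪
  { D | ∃ pn ∈ shiftedPreds M,
        D = ⟨[], [⟨pn.1, rangeVars pn.2⟩, ⟨bar pn.1, rangeVars pn.2⟩]⟩ }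

/-- The shifting transformation: `sh(M) = bs(pf(M))`. -/
def sh {P F : Type} [DecidableEq P] (eqP : P) (bar : P → P) (M : Set (Clause P F)) :
    Set (Clause P F) :=
  bs bar (pf eqP M)

/-! ### Blocking -/

/-- The head `x ≈ y ∨ x ≉ y` of the blocking clauses. -/
def blockSplitHead {P F : Type} (eqP neqP : P) : List (Atom P F) :=
  [eqAtom eqP (Term.var 0) (Term.var 1), eqAtom neqP (Term.var 0) (Term.var 1)]

/-- The clause `⊥ ← x ≈ y ∧ x ≉ y`. -/
def eqNeqBot {P F : Type} (eqP neqP : P) : Clause P F :=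
  ⟨[], [eqAtom eqP (Term.var 0) (Term.var 1), eqAtom neqP (Term.var 0) (Term.var 1)]⟩

/-- The unrestricted domain blocking transformation `blud`. -/
def blud {P F : Type} (domP eqP neqP : P) (M : Set (Clause P F)) : Set (Clause P F) :=
  M ∪ { ⟨blockSplitHead eqP neqP, [domAtom domP (Term.var 0), domAtom domP (Term.var 1)]⟩,
        eqNeqBot eqP neqP }

/-- The atom `sub(s,t)`. -/
def subAtom {P F : Type} (subP : P) (s t : Term F) : Atom P F := ⟨subP, [s, t]⟩

/-- The axioms describing the subterm relationship: `sub(x,x) ← dom(x)` and, for every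
`n`-ary function symbol `f` of the signature and `1 ≤ i ≤ n`,
`sub(x, f(x₁,...,xₙ)) ← sub(x,xᵢ) ∧ dom(x) ∧ dom(f(x₁,...,xₙ))`. -/
def subClauses {P F : Type} (domP subP : P) (Fs : Set (F × ℕ)) : Set (Clause P F) :=
  { ⟨[subAtom subP (Term.var 0) (Term.var 0)], [domAtom domP (Term.var 0)]⟩ } ∪
  { D | ∃ fn ∈ Fs, ∃ i, i < fn.2 ∧
        D = ⟨[subAtom subP (Term.var fn.2) (Term.app fn.1 (rangeVars fn.2))],
             [subAtom subP (Term.var fn.2) (Term.var i),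
              domAtom domP (Term.var fn.2),
              domAtom domP (Term.app fn.1 (rangeVars fn.2))]⟩ }

/-- The subterm domain blocking transformation `blsd`. -/
def blsd {P F : Type} (σ : Sig P F) (domP eqP neqP subP : P) (M : Set (Clause P F)) :
    Set (Clause P F) :=
  M ∪ subClauses domP subP σ.funcs ∪
  { ⟨blockSplitHead eqP neqP, [subAtom subP (Term.var 0) (Term.var 1)]⟩,
    eqNeqBot eqP neqP }

/-- The subterm predicate blocking transformation `blsp`. -/
def blsp {P F : Type} (σ : Sig P F) (domP eqP neqP subP : P) (M : Set (Clause P F)) :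
    Set (Clause P F) :=
  M ∪ subClauses domP subP σ.funcs ∪
  { D | ∃ p : P, (p, 1) ∈ σ.preds ∧
        D = ⟨blockSplitHead eqP neqP,
             [subAtom subP (Term.var 0) (Term.var 1),
              ⟨p, [Term.var 0]⟩, ⟨p, [Term.var 1]⟩]⟩ } ∪
  { eqNeqBot eqP neqP }

/-- The unrestricted predicate blocking transformation `blup`. -/
def blup {P F : Type} (σ : Sig P F) (domP eqP neqP : P) (M : Set (Clause P F)) :
    Set (Clause P F) :=
  M ∪ { D | ∃ p : P, (p, 1) ∈ σ.preds ∧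
        D = ⟨blockSplitHead eqP neqP, [⟨p, [Term.var 0]⟩, ⟨p, [Term.var 1]⟩]⟩ } ∪
  { eqNeqBot eqP neqP }

/-! ### Combined transformations -/

/-- The base transformations `rr`, `sh∘rr`, `crr`, `sh∘crr`
(composition read left-to-right, so `(sh∘rr)(M) = rr(sh(M))`). -/
inductive BaseTr | rr | shrr | crr | shcrr

/-- The optional blocking transformations. -/
inductive BlockTr | id | blsd | blsp | blud | blup

def applyBase {P F : Type} [DecidableEq P] [DecidableEq F] (σ : Sig P F) (domP : P) (c : F)
    (eqP : P) (bar : P → P) : BaseTr → Set (Clause P F) → Set (Clause P F)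
  | .rr, M => rr σ domP c M
  | .shrr, M => rr σ domP c (sh eqP bar M)
  | .crr, M => crr σ domP c M
  | .shcrr, M => crr σ domP c (sh eqP bar M)

def applyBlock {P F : Type} (σ : Sig P F) (domP eqP neqP subP : P) :
    BlockTr → Set (Clause P F) → Set (Clause P F)
  | .id, M => M
  | .blsd, M => blsd σ domP eqP neqP subP M
  | .blsp, M => blsp σ domP eqP neqP subP M
  | .blud, M => blud domP eqP neqP M
  | .blup, M => blup σ domP eqP neqP M

/-- A combined transformation: a base transformation optionally followed by a blocking
transformation (composition read left-to-right). -/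
def applyTr {P F : Type} [DecidableEq P] [DecidableEq F] (σ : Sig P F) (domP : P) (c : F)
    (eqP neqP subP : P) (bar : P → P) (b : BaseTr) (τ : BlockTr) (M : Set (Clause P F)) :
    Set (Clause P F) :=
  applyBlock σ domP eqP neqP subP τ (applyBase σ domP c eqP bar b M)

/-- The clause `x ≈ x ← dom(x)`. -/
def reflDomClause {P F : Type} (domP eqP : P) : Clause P F :=
  ⟨[eqAtom eqP (Term.var 0) (Term.var 0)], [domAtom domP (Term.var 0)]⟩

end BUMG

/-! Let `I` be a Herbrand model of `M ∪ EAX(M)`. Discard what `I` says about the fresh symbol `≉`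
and interpret `s ≉ t` as "`s ≈ t` is false in `I`" on ground terms. Clauses of `M` and of
`EAX(M)` do not mention `≉`, so they stay true; `x ≈ y ∨ x ≉ y` and `⊥ ← x ≈ y ∧ x ≉ y` hold by
construction. The only equality axioms of `blud(M)` not already in `EAX(M)` are the congruence
axioms of `≈` and `≉` (that of `dom` is there because `dom` occurs in `M`), and both follow from
symmetry and transitivity of `≈` in `I`. -/

namespace BUMG

@[simp] lemma Term.subst_var {F : Type} (g : ℕ → Term F) (n : ℕ) :
    (Term.var n).subst g = g n := by
  rw [Term.subst]

@[simp] lemma Atom.subst_eqAtom {P F : Type} (p : P) (s t : Term F) (g : ℕ → Term F) :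
    (eqAtom p s t).subst g = eqAtom p (s.subst g) (t.subst g) :=
  rfl

lemma Atom.isGround_eqAtom_iff {P F : Type} {p : P} {s t : Term F} :
    (eqAtom p s t).IsGround ↔ s.IsGround ∧ t.IsGround := by
  simp [eqAtom, Atom.IsGround, Atom.vars, Term.IsGround]

lemma groundSubst_getD {F : Type} {ts : List (Term F)} {d : Term F}
    (hts : ∀ t ∈ ts, t.IsGround) (hd : d.IsGround) : GroundSubst (fun n => ts.getD n d) := by
  intro n
  show (ts.getD n d).IsGround
  rw [List.getD_eq_getElem?_getD]
  cases h : ts[n]? with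
  | none => exact hd
  | some t => exact hts t (List.mem_of_getElem? h)

section EqualityAxioms

variable {P F : Type}

def eqReflClause (e : P) : Clause P F :=
  ⟨[eqAtom e (Term.var 0) (Term.var 0)], []⟩

def eqSymmClause (e : P) : Clause P F :=
  ⟨[eqAtom e (Term.var 1) (Term.var 0)], [eqAtom e (Term.var 0) (Term.var 1)]⟩

def eqTransClause (e : P) : Clause P F :=
  ⟨[eqAtom e (Term.var 0) (Term.var 2)],
    [eqAtom e (Term.var 0) (Term.var 1), eqAtom e (Term.var 1) (Term.var 2)]⟩

def funcCongrClause (e : P) (fn : F × ℕ) : Clause P F :=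
  ⟨[eqAtom e (Term.app fn.1 (xsList fn.2)) (Term.app fn.1 (ysList fn.2))], eqConjList e fn.2⟩

def predCongrClause (e : P) (pn : P × ℕ) : Clause P F :=
  ⟨[⟨pn.1, ysList pn.2⟩], ⟨pn.1, xsList pn.2⟩ :: eqConjList e pn.2⟩

lemma predCongrClause_binary (e p : P) :
    predCongrClause e (p, 2) = (⟨[eqAtom p (Term.var 1) (Term.var 3)],
      [eqAtom p (Term.var 0) (Term.var 2), eqAtom e (Term.var 0) (Term.var 1),
        eqAtom e (Term.var 2) (Term.var 3)]⟩ : Clause P F) := by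
  simp [predCongrClause, eqAtom, xsList, ysList, eqConjList, List.range_succ]

lemma mem_EAX {e : P} {Ps : Set (P × ℕ)} {Fs : Set (F × ℕ)} {C : Clause P F} :
    C ∈ EAX e Ps Fs ↔
      ((C = eqReflClause e ∨ C = eqSymmClause e ∨ C = eqTransClause e) ∨
        ∃ fn ∈ Fs, C = funcCongrClause e fn) ∨ ∃ pn ∈ Ps, C = predCongrClause e pn :=
  Iff.rfl

lemma eqSymmClause_mem_EAX (e : P) (Ps : Set (P × ℕ)) (Fs : Set (F × ℕ)) :
    eqSymmClause e ∈ EAX e Ps Fs :=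
  mem_EAX.mpr (Or.inl (Or.inl (Or.inr (Or.inl rfl))))

lemma eqTransClause_mem_EAX (e : P) (Ps : Set (P × ℕ)) (Fs : Set (F × ℕ)) :
    eqTransClause e ∈ EAX e Ps Fs :=
  mem_EAX.mpr (Or.inl (Or.inl (Or.inr (Or.inr rfl))))

lemma EAX_mono {e : P} {Ps Ps' : Set (P × ℕ)} {Fs Fs' : Set (F × ℕ)} (hPs : Ps ⊆ Ps')
    (hFs : Fs ⊆ Fs') : EAX e Ps Fs ⊆ EAX e Ps' Fs' := by
  intro C
  simp only [mem_EAX]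
  rintro ((h | ⟨fn, hfn, rfl⟩) | ⟨pn, hpn, rfl⟩)
  · exact Or.inl (Or.inl h)
  · exact Or.inl (Or.inr ⟨fn, hFs hfn, rfl⟩)
  · exact Or.inr ⟨pn, hPs hpn, rfl⟩

lemma EAX_insert_pred_subset (e : P) (pn : P × ℕ) (Ps : Set (P × ℕ)) (Fs : Set (F × ℕ)) :
    EAX e (insert pn Ps) Fs ⊆ insert (predCongrClause e pn) (EAX e Ps Fs) := by
  intro C
  simp only [mem_EAX, Set.mem_insert_iff]
  rintro (h | ⟨pn', rfl | hpn', rfl⟩)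
  · exact Or.inr (Or.inl h)
  · exact Or.inl rfl
  · exact Or.inr (Or.inr ⟨pn', hpn', rfl⟩)

lemma pred_eq_or_mem_of_mem_EAX {e : P} {Ps : Set (P × ℕ)} {Fs : Set (F × ℕ)}
    {C : Clause P F} (hC : C ∈ EAX e Ps Fs) {a : Atom P F} (ha : a ∈ C.atoms) :
    a.pred = e ∨ (a.pred, a.args.length) ∈ Ps := by
  have hconj : ∀ {n}, a ∈ eqConjList (F := F) e n → a.pred = e := by
    intro n h
    obtain ⟨i, -, rfl⟩ := List.mem_map.mp h
    rfl
  rcases mem_EAX.mp hC with ((rfl | rfl | rfl) | ⟨fn, -, rfl⟩) | ⟨pn, hpn, rfl⟩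
  all_goals simp only [Clause.atoms, eqReflClause, eqSymmClause, eqTransClause, funcCongrClause,
    predCongrClause, List.mem_append, List.mem_cons, List.not_mem_nil, or_false] at ha
  iterate 3 exact Or.inl (by rcases ha with rfl | rfl | rfl <;> rfl)
  · rcases ha with rfl | ha
    · exact Or.inl rfl
    · exact Or.inl (hconj ha)
  · rcases ha with (rfl | rfl | ha)
    · simpa [ysList] using Or.inr hpn
    · simpa [xsList] using Or.inr hpn
    · exact Or.inl (hconj ha)

end EqualityAxioms

section Interpretations

variable {P F : Type} {e q : P} {I : Set (Atom P F)}

lemma eqAtom_mem_symm (hIg : ∀ a ∈ I, a.IsGround) (hsymm : satClause I (eqSymmClause e))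
    {s t : Term F} (h : eqAtom e s t ∈ I) : eqAtom e t s ∈ I := by
  obtain ⟨hs, ht⟩ := Atom.isGround_eqAtom_iff.mp (hIg _ h)
  simpa [eqSymmClause] using
    hsymm (fun n => [s, t].getD n s) (groundSubst_getD (by simp [hs, ht]) hs)
      (by simpa [eqSymmClause] using h)

lemma eqAtom_mem_trans (hIg : ∀ a ∈ I, a.IsGround) (htrans : satClause I (eqTransClause e))
    {s t u : Term F} (hst : eqAtom e s t ∈ I) (htu : eqAtom e t u ∈ I) : eqAtom e s u ∈ I := by
  obtain ⟨hs, ht⟩ := Atom.isGround_eqAtom_iff.mp (hIg _ hst)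
  obtain ⟨-, hu⟩ := Atom.isGround_eqAtom_iff.mp (hIg _ htu)
  simpa [eqTransClause] using
    htrans (fun n => [s, t, u].getD n s) (groundSubst_getD (by simp [hs, ht, hu]) hs)
      (by simp [eqTransClause, hst, htu])

lemma eqAtom_mem_congr (hIg : ∀ a ∈ I, a.IsGround) (hsymm : satClause I (eqSymmClause e))
    (htrans : satClause I (eqTransClause e)) {s s' t t' : Term F} (hs : eqAtom e s s' ∈ I)
    (ht : eqAtom e t t' ∈ I) (h : eqAtom e s t ∈ I) : eqAtom e s' t' ∈ I :=
  eqAtom_mem_trans hIg htrans (eqAtom_mem_trans hIg htrans (eqAtom_mem_symm hIg hsymm hs) h) ht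

lemma satClause_predCongrClause_self (hIg : ∀ a ∈ I, a.IsGround)
    (hsymm : satClause I (eqSymmClause e)) (htrans : satClause I (eqTransClause e)) :
    satClause I (predCongrClause e (e, 2)) := by
  rw [predCongrClause_binary]
  intro g _ hbody
  simp only [List.forall_mem_cons, List.mem_singleton, forall_eq, Atom.subst_eqAtom,
    Term.subst_var] at hbody
  obtain ⟨h02, h01, h23⟩ := hbody
  simpa using eqAtom_mem_congr hIg hsymm htrans h01 h23 h02

lemma satClause_congr {J : Set (Atom P F)} (hIJ : ∀ a : Atom P F, a.pred ≠ q → (a ∈ I ↔ a ∈ J))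
    {C : Clause P F} (hC : ∀ a ∈ C.atoms, a.pred ≠ q) : satClause I C ↔ satClause J C := by
  have hmem : ∀ a ∈ C.atoms, ∀ g, a.subst g ∈ I ↔ a.subst g ∈ J := fun a ha g =>
    hIJ _ (hC a ha)
  unfold satClause
  refine forall₂_congr fun g _ => imp_congr ?_ ?_
  · exact forall₂_congr fun a ha => hmem a (List.mem_append_right _ ha) g
  · exact exists_congr fun a => and_congr_right fun ha => hmem a (List.mem_append_left _ ha) g

def extendByNeq (e q : P) (I : Set (Atom P F)) : Set (Atom P F) :=
  {a ∈ I | a.pred ≠ q} ∪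
    {a | ∃ s t : Term F, s.IsGround ∧ t.IsGround ∧ eqAtom e s t ∉ I ∧ a = eqAtom q s t}

lemma mem_extendByNeq_of_pred_ne {a : Atom P F} (ha : a.pred ≠ q) :
    a ∈ extendByNeq e q I ↔ a ∈ I := by
  constructor
  · rintro (⟨h, -⟩ | ⟨s, t, -, -, -, rfl⟩)
    · exact h
    · exact absurd rfl ha
  · exact fun h => Or.inl ⟨h, ha⟩

lemma eqAtom_mem_extendByNeq_iff {s t : Term F} :
    eqAtom q s t ∈ extendByNeq e q I ↔ s.IsGround ∧ t.IsGround ∧ eqAtom e s t ∉ I := by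
  constructor
  · rintro (⟨-, h⟩ | ⟨s', t', hs, ht, hst, h⟩)
    · exact absurd rfl h
    · simp only [eqAtom, Atom.mk.injEq, List.cons.injEq, and_true, true_and] at h
      obtain ⟨rfl, rfl⟩ := h
      exact ⟨hs, ht, hst⟩
  · rintro ⟨hs, ht, hst⟩
    exact Or.inr ⟨s, t, hs, ht, hst, rfl⟩

lemma isGround_of_mem_extendByNeq (hIg : ∀ a ∈ I, a.IsGround) :
    ∀ a ∈ extendByNeq e q I, a.IsGround := by
  rintro a (⟨h, -⟩ | ⟨s, t, hs, ht, -, rfl⟩)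
  · exact hIg a h
  · exact Atom.isGround_eqAtom_iff.mpr ⟨hs, ht⟩

lemma satClause_extendByNeq_iff {C : Clause P F} (hC : ∀ a ∈ C.atoms, a.pred ≠ q) :
    satClause (extendByNeq e q I) C ↔ satClause I C :=
  (satClause_congr (fun _ ha => (mem_extendByNeq_of_pred_ne ha).symm) hC).symm

lemma eqAtom_mem_extendByNeq_iff_of_ne (hqe : q ≠ e) {s t : Term F} :
    eqAtom e s t ∈ extendByNeq e q I ↔ eqAtom e s t ∈ I :=
  mem_extendByNeq_of_pred_ne hqe.symm

lemma satClause_extendByNeq_blockSplit (hqe : q ≠ e) (body : List (Atom P F)) :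
    satClause (extendByNeq e q I) ⟨blockSplitHead e q, body⟩ := by
  intro g hg _
  dsimp only
  simp only [blockSplitHead, List.exists_mem_cons_iff, List.not_mem_nil, false_and, exists_false,
    or_false, Atom.subst_eqAtom, Term.subst_var, eqAtom_mem_extendByNeq_iff_of_ne hqe,
    eqAtom_mem_extendByNeq_iff]
  exact (em _).imp_right fun h => ⟨hg 0, hg 1, h⟩

lemma satClause_extendByNeq_eqNeqBot (hqe : q ≠ e) :
    satClause (extendByNeq e q I) (eqNeqBot e q) := by
  intro g _ hbody
  simp only [eqNeqBot, List.forall_mem_cons, List.mem_singleton, forall_eq, Atom.subst_eqAtom,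
    Term.subst_var, eqAtom_mem_extendByNeq_iff_of_ne hqe, eqAtom_mem_extendByNeq_iff] at hbody
  exact absurd hbody.1 hbody.2.2.2

lemma satClause_extendByNeq_predCongr (hqe : q ≠ e) (hIg : ∀ a ∈ I, a.IsGround)
    (hsymm : satClause I (eqSymmClause e)) (htrans : satClause I (eqTransClause e)) :
    satClause (extendByNeq e q I) (predCongrClause e (q, 2)) := by
  rw [predCongrClause_binary]
  intro g hg hbody
  simp only [List.forall_mem_cons, List.mem_singleton, forall_eq, Atom.subst_eqAtom,
    Term.subst_var, eqAtom_mem_extendByNeq_iff_of_ne hqe, eqAtom_mem_extendByNeq_iff] at hbody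
  obtain ⟨⟨-, -, hn02⟩, h01, h23⟩ := hbody
  simp only [List.exists_mem_cons_iff, List.not_mem_nil, false_and, exists_false, or_false,
    Atom.subst_eqAtom, Term.subst_var, eqAtom_mem_extendByNeq_iff]
  refine ⟨hg 1, hg 3, fun h13 => hn02 ?_⟩
  exact eqAtom_mem_congr hIg hsymm htrans (eqAtom_mem_symm hIg hsymm h01)
    (eqAtom_mem_symm hIg hsymm h23) h13

end Interpretations

section Blocking

variable {P F : Type} {d e q : P} {M : Set (Clause P F)}

lemma mem_predsOf_of_mem_atoms {C : Clause P F} (hC : C ∈ M) {a : Atom P F} (ha : a ∈ C.atoms) :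
    (a.pred, a.args.length) ∈ predsOf M :=
  ⟨C, hC, List.mem_map_of_mem ha⟩

lemma pred_ne_of_mem_union_EAX (hfresh : ∀ n, (q, n) ∉ predsOf M) (hqe : q ≠ e)
    {C : Clause P F} (hC : C ∈ M ∪ EAX e (insert (e, 2) (predsOf M)) (funcsOf M))
    {a : Atom P F} (ha : a ∈ C.atoms) : a.pred ≠ q := by
  rintro rfl
  rcases hC with hC | hC
  · exact hfresh _ (mem_predsOf_of_mem_atoms hC ha)
  · rcases pred_eq_or_mem_of_mem_EAX hC ha with h | h | h
    · exact hqe h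
    · exact hqe (Prod.ext_iff.mp h).1
    · exact hfresh _ h

lemma predsOf_blud_subset (hdom : (d, 1) ∈ predsOf M) :
    predsOf (blud d e q M) ⊆ insert (q, 2) (insert (e, 2) (predsOf M)) := by
  rintro pn ⟨C, (hC | rfl | rfl), hpn⟩
  · exact Or.inr (Or.inr ⟨C, hC, hpn⟩)
  · simp only [Clause.preds, Clause.atoms, blockSplitHead, domAtom, eqAtom, List.cons_append,
      List.nil_append, List.map_cons, List.map_nil, List.length_cons, List.length_nil,
      List.mem_cons, List.not_mem_nil, or_false] at hpn
    rcases hpn with rfl | rfl | rfl | rfl <;> simp [hdom]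
  · simp only [Clause.preds, Clause.atoms, eqNeqBot, eqAtom, List.nil_append, List.map_cons,
      List.map_nil, List.length_cons, List.length_nil, List.mem_cons, List.not_mem_nil,
      or_false] at hpn
    rcases hpn with rfl | rfl <;> simp

lemma funcsOf_blud_subset : funcsOf (blud d e q M) ⊆ funcsOf M := by
  rintro fn ⟨C, (hC | rfl | rfl), hfn⟩
  · exact ⟨C, hC, hfn⟩
  all_goals simp [Clause.funcs, Clause.atoms, blockSplitHead, eqNeqBot, domAtom, eqAtom,
    Atom.funcs, Term.funcs] at hfn

end Blocking

theorem blud_soundness_general {P F : Type}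
    (domP eqP neqP : P) (M : Set (Clause P F))
    (hdomM : (domP, 1) ∈ predsOf M)
    (hneqFresh : ∀ n, (neqP, n) ∉ predsOf M)
    (hneqEq : neqP ≠ eqP)
    (hsat : ESatisfiable eqP M) :
    ESatisfiable eqP (blud domP eqP neqP M) := by
  obtain ⟨I, hIg, hI⟩ := hsat
  have hsymm := hI _ (Or.inr (eqSymmClause_mem_EAX eqP (predsOf M) (funcsOf M)))
  have htrans := hI _ (Or.inr (eqTransClause_mem_EAX eqP (predsOf M) (funcsOf M)))
  have hIM : ∀ C ∈ M ∪ EAX eqP (insert (eqP, 2) (predsOf M)) (funcsOf M), satClause I C := by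
    rintro C (hC | hC)
    · exact hI C (Or.inl hC)
    rcases EAX_insert_pred_subset _ _ _ _ hC with rfl | hC
    · exact satClause_predCongrClause_self hIg hsymm htrans
    · exact hI C (Or.inr hC)
  have hI'M : ∀ C ∈ M ∪ EAX eqP (insert (eqP, 2) (predsOf M)) (funcsOf M),
      satClause (extendByNeq eqP neqP I) C := fun C hC =>
    (satClause_extendByNeq_iff fun _ => pred_ne_of_mem_union_EAX hneqFresh hneqEq hC).mpr
      (hIM C hC)
  refine ⟨extendByNeq eqP neqP I, isGround_of_mem_extendByNeq hIg, ?_⟩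
  rintro C ((hC | rfl | rfl) | hC)
  · exact hI'M C (Or.inl hC)
  · exact satClause_extendByNeq_blockSplit hneqEq _
  · exact satClause_extendByNeq_eqNeqBot hneqEq
  · have hC' := EAX_mono (predsOf_blud_subset hdomM) funcsOf_blud_subset hC
    rcases EAX_insert_pred_subset _ _ _ _ hC' with rfl | hC'
    · exact satClause_extendByNeq_predCongr hneqEq hIg hsymm htrans
    · exact hI'M C (Or.inr hC')

/-- **Soundness of unrestricted domain blocking**: for every clause set `M`, if `M` is
E-satisfiable then `blud(M)` is E-satisfiable. `M` contains the unary predicate `dom`, and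
`≉` (`neqP`) is a fresh binary predicate symbol uniquely associated with `≈` and not
occurring in `M`. -/
theorem blud_soundness {P F : Type} [DecidableEq P] [DecidableEq F]
    (domP eqP neqP : P) (M : Set (Clause P F)) (hfin : M.Finite)
    (hdomM : (domP, 1) ∈ predsOf M)
    (hneqFresh : ∀ n, (neqP, n) ∉ predsOf M)
    (hneqEq : neqP ≠ eqP)
    (hsat : ESatisfiable eqP M) :
    ESatisfiable eqP (blud domP eqP neqP M) :=
  blud_soundness_general domP eqP neqP M hdomM hneqFresh hneqEq hsat

end BUMG
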